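/- (Theorem 4.3, stability) Let k > 0, p ∈ ℝ³, and let F and F_δ be bounded linear operators on L²(S²,ℂ³) such that ‖F − F_δ‖ ≤ δ‖F‖ for some δ ≥ 0 (operator norms). Then for every y ∈ ℝ³, ∫_{S²} |p·(Fφ_y)(x̂)|² dσ(x̂) − ∫_{S²} |p·(F_δφ_y)(x̂)|² dσ(x̂) ≤ 4π |p|⁴ ‖F‖² (δ² + 2δ). -/

import Mathlib

/-! Write `A g := p · g` for the bounded operator `L²(S², ℂ³) → L²(S²)`, of norm at most `|p|`.
The difference of the two functionals is `‖A F φ‖² − ‖A F_δ φ‖² ≤ 2 ‖A F φ‖ ‖A (F − F_δ) φ‖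
≤ 2 δ |p|² ‖F‖² ‖φ‖²`, and `‖φ_y‖² ≤ 4π |p|²` because `(d × p) × d = p − (d · p) d` is the
projection of `p` onto the tangent plane at `d`, so that `|φ_y(d)| ≤ |p|`. -/

open MeasureTheory Metric Complex

noncomputable section

abbrev R3 : Type := EuclideanSpace ℝ (Fin 3)
abbrev C3 : Type := EuclideanSpace ℂ (Fin 3)
abbrev S2 : Type := Metric.sphere (0 : R3) 1

/-- The surface measure on the unit sphere `S²` (total mass `4π`). -/
def σS : Measure S2 := (volume : Measure R3).toSphere

/-- Componentwise complexification of a real vector. -/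
def cm (x : R3) : C3 := WithLp.toLp 2 (fun i => (x i : ℂ))

/-- Real dot product on `ℝ³`. -/
def dotR (a b : R3) : ℝ := ∑ i, a i * b i

/-- Bilinear (unconjugated) dot product on `ℂ³`. -/
def dotc (a b : C3) : ℂ := ∑ i, a i * b i

/-- Cross product on `ℂ³`, extended bilinearly. -/
def crossc (a b : C3) : C3 := WithLp.toLp 2 (crossProduct a b)

/-- Hermitian pairing `a · conj b`. -/
def hdot (a b : C3) : ℂ := ∑ i, a i * (starRingEnd ℂ) (b i)

/-- The test function `φ_y(d) = (d×p)×d e^{−ik d·y}`. -/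
def phiy (k : ℝ) (p y : R3) (d : S2) : C3 :=
  Complex.exp (-(Complex.I * k * (dotR (d : R3) y))) •
    crossc (crossc (cm (d : R3)) (cm p)) (cm (d : R3))

/-- The Herglotz wave function `(Hg)(x) = ∫_{S²} g(d) e^{ik x·d} dσ(d)`. -/
def herg (k : ℝ) (g : S2 → C3) (x : R3) : C3 :=
  ∫ d : S2, Complex.exp (Complex.I * k * (dotR x (d : R3))) • g d ∂σS

open Classical in
/-- The `L²` class of a function (`0` if the function is not square integrable). -/
def toL2 {α : Type} [MeasurableSpace α] (μ : Measure α) (f : α → C3) : Lp C3 2 μ :=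
  if h : MemLp f 2 μ then h.toLp f else 0

/-- `(H^*f)(d) = d × (∫_Ω f(x) e^{−ik x·d} dx) × d`. -/
def hergSt (k : ℝ) (Ω : Set R3) (f : R3 → C3) (d : S2) : C3 :=
  crossc (crossc (cm (d : R3))
    (∫ x in Ω, Complex.exp (-(Complex.I * k * (dotR x (d : R3)))) • f x)) (cm (d : R3))

/-- The operator `F` built from the factorization `F = H^* T H`:
`(Fg)(d) = d × (∫_Ω (T(Hg))(x) e^{−ik x·d} dx) × d`. -/
def Fop (k : ℝ) (Ω : Set R3)
    (T : Lp C3 2 (volume.restrict Ω) →L[ℂ] Lp C3 2 (volume.restrict Ω))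
    (g : S2 → C3) (d : S2) : C3 :=
  crossc (crossc (cm (d : R3))
    (∫ x in Ω, Complex.exp (-(Complex.I * k * (dotR x (d : R3)))) •
      (T (toL2 (volume.restrict Ω) (herg k g))) x)) (cm (d : R3))

/-- The OSM imaging functional `I_OSM(y) = ∫_{S²} |p·(Fφ_y)(x̂)|² dσ(x̂)`. -/
def IOSM (k : ℝ) (Ω : Set R3)
    (T : Lp C3 2 (volume.restrict Ω) →L[ℂ] Lp C3 2 (volume.restrict Ω))
    (p y : R3) : ℝ :=
  ∫ xh : S2, ‖dotc (cm p) (Fop k Ω T (phiy k p y) xh)‖ ^ 2 ∂σS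

/-- The DSM imaging functional `I_DSM(y) = |⟨Fφ_y, φ_y⟩_{L²(S²)}|`. -/
def IDSM (k : ℝ) (Ω : Set R3)
    (T : Lp C3 2 (volume.restrict Ω) →L[ℂ] Lp C3 2 (volume.restrict Ω))
    (p y : R3) : ℝ :=
  ‖∫ d : S2, hdot (Fop k Ω T (phiy k p y) d) (phiy k p y d) ∂σS‖

/-- The set `H(L²_t(S²)) ⊂ L²(Ω,ℂ³)`: images under the Herglotz operator of square
integrable tangential fields. -/
def ranHt (k : ℝ) (Ω : Set R3) : Set (Lp C3 2 (volume.restrict Ω)) :=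
  {h | ∃ g : S2 → C3, MemLp g 2 σS ∧ (∀ᵐ (d : S2) ∂σS, dotc (cm d.val) (g d) = 0) ∧
    h = toL2 (volume.restrict Ω) (herg k g)}

lemma sq_norm_sub_sq_norm_le {E : Type*} [SeminormedAddCommGroup E] (a b : E) :
    ‖a‖ ^ 2 - ‖b‖ ^ 2 ≤ 2 * ‖a‖ * ‖a - b‖ := by
  have hab := norm_sub_norm_le a b
  rcases le_total ‖a‖ ‖b‖ with h | h
  · nlinarith [norm_nonneg a, norm_nonneg (a - b)]
  · nlinarith [norm_nonneg a, norm_nonneg b, norm_nonneg (a - b)]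

lemma sq_norm_comp_apply_sub_sq_norm_comp_apply_le {𝕜 E F G : Type*} [NontriviallyNormedField 𝕜]
    [SeminormedAddCommGroup E] [SeminormedAddCommGroup F] [SeminormedAddCommGroup G]
    [NormedSpace 𝕜 E] [NormedSpace 𝕜 F] [NormedSpace 𝕜 G]
    (A : F →L[𝕜] G) (T S : E →L[𝕜] F) (x : E) :
    ‖A (T x)‖ ^ 2 - ‖A (S x)‖ ^ 2 ≤ 2 * ‖A‖ ^ 2 * ‖T‖ * ‖T - S‖ * ‖x‖ ^ 2 := by
  have hT : ‖A (T x)‖ ≤ ‖A‖ * (‖T‖ * ‖x‖) := A.le_opNorm_of_le (T.le_opNorm x)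
  have hTS : ‖A (T x) - A (S x)‖ ≤ ‖A‖ * (‖T - S‖ * ‖x‖) := by
    rw [← map_sub, ← sub_apply]
    exact A.le_opNorm_of_le ((T - S).le_opNorm x)
  calc ‖A (T x)‖ ^ 2 - ‖A (S x)‖ ^ 2 ≤ 2 * ‖A (T x)‖ * ‖A (T x) - A (S x)‖ :=
        sq_norm_sub_sq_norm_le _ _
    _ ≤ 2 * (‖A‖ * (‖T‖ * ‖x‖)) * (‖A‖ * (‖T - S‖ * ‖x‖)) := by gcongr
    _ = 2 * ‖A‖ ^ 2 * ‖T‖ * ‖T - S‖ * ‖x‖ ^ 2 := by ring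

section L2

variable {α : Type*} [MeasurableSpace α] {μ : Measure α}

lemma L2.integral_norm_sq_eq {E : Type*} [NormedAddCommGroup E] (f : Lp E 2 μ) :
    ∫ x, ‖f x‖ ^ 2 ∂μ = ‖f‖ ^ 2 := by
  rw [Lp.norm_def, toReal_eLpNorm (Lp.aestronglyMeasurable f),
    lpNorm_eq_integral_norm_rpow_toReal two_ne_zero ENNReal.ofNat_ne_top
      (Lp.aestronglyMeasurable f)]
  simp only [ENNReal.toReal_ofNat, Real.rpow_two]
  rw [← Real.rpow_natCast, ← Real.rpow_mul (integral_nonneg fun x => by positivity)]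
  norm_num

lemma L2.norm_sq_le_of_ae_bound {E : Type*} [NormedAddCommGroup E] [IsFiniteMeasure μ]
    {f : Lp E 2 μ} {C : ℝ} (hf : ∀ᵐ x ∂μ, ‖f x‖ ≤ C) : ‖f‖ ^ 2 ≤ μ.real Set.univ * C ^ 2 := by
  rw [← L2.integral_norm_sq_eq, ← smul_eq_mul, ← integral_const]
  refine integral_mono_of_nonneg (ae_of_all _ fun x => by positivity) (integrable_const _) ?_
  filter_upwards [hf] with x hx
  exact pow_le_pow_left₀ (norm_nonneg _) hx 2

lemma integral_norm_sq_apply_eq_sq_norm_compLp {𝕜 E F : Type*} [NontriviallyNormedField 𝕜]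
    [NormedAddCommGroup E] [NormedSpace 𝕜 E] [NormedAddCommGroup F] [NormedSpace 𝕜 F]
    (L : E →L[𝕜] F) (f : Lp E 2 μ) : ∫ x, ‖L (f x)‖ ^ 2 ∂μ = ‖L.compLp f‖ ^ 2 := by
  rw [← L2.integral_norm_sq_eq]
  refine integral_congr_ae ?_
  filter_upwards [L.coeFn_compLp f] with x hx
  rw [hx]

end L2

lemma coeFn_toL2 {α : Type} [MeasurableSpace α] {μ : Measure α} {f : α → C3}
    (hf : MemLp f 2 μ) : toL2 μ f =ᵐ[μ] f := by
  rw [toL2, dif_pos hf]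
  exact hf.coeFn_toLp

instance : IsFiniteMeasure σS := by unfold σS; infer_instance

lemma measureReal_σS_univ : σS.real Set.univ = 4 * Real.pi := by
  rw [measureReal_def, σS, Measure.toSphere_apply_univ, EuclideanSpace.volume_ball_fin_three]
  simp only [finrank_euclideanSpace_fin]
  simp [ENNReal.toReal_ofReal (by positivity : 0 ≤ Real.pi * 4 / 3)]
  ring

lemma norm_sub_inner_smul_le {E : Type*} [NormedAddCommGroup E] [InnerProductSpace ℝ E]
    {d : E} (hd : ‖d‖ = 1) (p : E) : ‖p - inner ℝ d p • d‖ ≤ ‖p‖ := by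
  have h : ‖p - inner ℝ d p • d‖ ^ 2 = ‖p‖ ^ 2 - inner ℝ d p ^ 2 := by
    rw [norm_sub_sq_real, norm_smul, hd, inner_smul_right, real_inner_comm, Real.norm_eq_abs,
      mul_one, sq_abs]
    ring
  nlinarith [sq_nonneg (inner ℝ d p), norm_nonneg p, norm_nonneg (p - inner ℝ d p • d)]

lemma cross_cross_of_norm_eq_one {d : R3} (hd : ‖d‖ = 1) (p : R3) :
    WithLp.toLp 2 (crossProduct (crossProduct d p) d) = p - inner ℝ d p • d := by
  have hdd : d ⬝ᵥ d = 1 := by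
    simpa [hd] using (EuclideanSpace.inner_eq_star_dotProduct d d).symm
  rw [cross_cross_eq_smul_sub_smul, hdd, one_smul, EuclideanSpace.inner_eq_star_dotProduct,
    star_trivial]
  rfl

lemma norm_cm (x : R3) : ‖cm x‖ = ‖x‖ := by
  simp [EuclideanSpace.norm_eq, cm]

@[fun_prop]
lemma continuous_cm : Continuous cm := by
  unfold cm; fun_prop

lemma crossc_cm (a b : R3) : crossc (cm a) (cm b) = cm (WithLp.toLp 2 (crossProduct a b)) := by
  ext i
  fin_cases i <;> simp [crossc, cm, cross_apply]

lemma dotc_cm_eq_inner (p : R3) (z : C3) : dotc (cm p) z = inner ℂ (cm p) z := by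
  simp [dotc, PiLp.inner_apply, cm, mul_comm]

lemma dotR_eq_inner (a b : R3) : dotR a b = inner ℝ a b := by
  simp [dotR, PiLp.inner_apply, mul_comm]

lemma phiy_eq (k : ℝ) (p y : R3) (d : S2) :
    phiy k p y d = Complex.exp (-(Complex.I * k * inner ℝ (d : R3) y)) •
      cm (p - inner ℝ (d : R3) p • (d : R3)) := by
  rw [phiy, crossc_cm, crossc_cm, cross_cross_of_norm_eq_one (norm_eq_of_mem_sphere d),
    dotR_eq_inner]

lemma norm_phiy_le (k : ℝ) (p y : R3) (d : S2) : ‖phiy k p y d‖ ≤ ‖p‖ := by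
  rw [phiy_eq, norm_smul, Complex.norm_exp, norm_cm]
  simpa using norm_sub_inner_smul_le (norm_eq_of_mem_sphere d) p

lemma memLp_phiy (k : ℝ) (p y : R3) : MemLp (phiy k p y) 2 σS := by
  have hcont : Continuous (phiy k p y) := by
    simp_rw [funext (phiy_eq k p y)]
    fun_prop
  exact MemLp.of_bound hcont.aestronglyMeasurable ‖p‖ (ae_of_all _ (norm_phiy_le k p y))

lemma sq_norm_toL2_phiy_le (k : ℝ) (p y : R3) :
    ‖toL2 σS (phiy k p y)‖ ^ 2 ≤ 4 * Real.pi * ‖p‖ ^ 2 := by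
  rw [← measureReal_σS_univ]
  refine L2.norm_sq_le_of_ae_bound ?_
  filter_upwards [coeFn_toL2 (memLp_phiy k p y)] with d hd
  rw [hd]
  exact norm_phiy_le k p y d

theorem stmt2_general (k : ℝ) (p : R3)
    (F Fδ : Lp C3 2 σS →L[ℂ] Lp C3 2 σS) (δ : ℝ)
    (hnoise : ‖F - Fδ‖ ≤ δ * ‖F‖) (y : R3) :
    (∫ xh : S2, ‖dotc (cm p) ((F (toL2 σS (phiy k p y))) xh)‖ ^ 2 ∂σS) -
      (∫ xh : S2, ‖dotc (cm p) ((Fδ (toL2 σS (phiy k p y))) xh)‖ ^ 2 ∂σS) ≤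
      4 * Real.pi * ‖p‖ ^ 4 * ‖F‖ ^ 2 * (δ ^ 2 + 2 * δ) := by
  set φ := toL2 σS (phiy k p y)
  set A := (innerSL ℂ (cm p)).compLpL 2 σS
  have hA : ‖A‖ ≤ ‖p‖ := (ContinuousLinearMap.norm_compLpL_le _).trans_eq (by
    rw [innerSL_apply_norm, norm_cm])
  have hint (g : Lp C3 2 σS) : ∫ xh, ‖dotc (cm p) (g xh)‖ ^ 2 ∂σS = ‖A g‖ ^ 2 := by
    simp_rw [dotc_cm_eq_inner]
    exact integral_norm_sq_apply_eq_sq_norm_compLp (innerSL ℂ (cm p)) g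
  have hδF : 0 ≤ δ * ‖F‖ := (norm_nonneg _).trans hnoise
  rw [hint, hint]
  calc ‖A (F φ)‖ ^ 2 - ‖A (Fδ φ)‖ ^ 2 ≤ 2 * ‖A‖ ^ 2 * ‖F‖ * ‖F - Fδ‖ * ‖φ‖ ^ 2 :=
        sq_norm_comp_apply_sub_sq_norm_comp_apply_le A F Fδ φ
    _ ≤ 2 * ‖p‖ ^ 2 * ‖F‖ * (δ * ‖F‖) * (4 * Real.pi * ‖p‖ ^ 2) := by
        gcongr
        exact sq_norm_toL2_phiy_le k p y
    _ ≤ 4 * Real.pi * ‖p‖ ^ 4 * ‖F‖ ^ 2 * (δ ^ 2 + 2 * δ) := by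
        have : 0 ≤ 4 * Real.pi * ‖p‖ ^ 4 * ‖F‖ ^ 2 * δ ^ 2 := by positivity
        linarith

/-- **Theorem 4.3 (stability).** -/
theorem stmt2 (k : ℝ) (hk : 0 < k) (p : R3)
    (F Fδ : Lp C3 2 σS →L[ℂ] Lp C3 2 σS) (δ : ℝ) (hδ : 0 ≤ δ)
    (hnoise : ‖F - Fδ‖ ≤ δ * ‖F‖) (y : R3) :
    (∫ xh : S2, ‖dotc (cm p) ((F (toL2 σS (phiy k p y))) xh)‖ ^ 2 ∂σS) -
      (∫ xh : S2, ‖dotc (cm p) ((Fδ (toL2 σS (phiy k p y))) xh)‖ ^ 2 ∂σS) ≤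
      4 * Real.pi * ‖p‖ ^ 4 * ‖F‖ ^ 2 * (δ ^ 2 + 2 * δ) :=
  stmt2_general k p F Fδ δ hnoise y
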